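/- Let d ≥ 1 be an integer and let V : ℤᵈ → ℂ satisfy ∑_{n ∈ ℤᵈ} |V(n)| < ∞, and set H = Δ + V on ℓ²(ℤᵈ). Then the diagonal family (((H⁴ − Δ⁴)δ_m)(m))_{m ∈ ℤᵈ} is summable and ∑_{m ∈ ℤᵈ} ((H⁴ − Δ⁴)δ_m)(m) = ∑_{m ∈ ℤᵈ} V(m)⁴ + 2d·∑_{m ∈ ℤᵈ} V(m)² + (1/2)·∑_{m ∈ ℤᵈ} ∑_{j=1}^d V(m)·(V(m + eⱼ) + V(m − eⱼ)). -/

import Mathlib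

open MeasureTheory

/-- `L` is the discrete Laplacian on `ℓ²(ℤᵈ)`:
`(Lf)(n) = (1/2)∑_{j=1}^d (f(n+eⱼ) + f(n-eⱼ))`. -/
def IsDiscreteLaplacian (d : ℕ)
    (L : lp (fun _ : Fin d → ℤ => ℂ) 2 →L[ℂ] lp (fun _ : Fin d → ℤ => ℂ) 2) : Prop :=
  ∀ (f : lp (fun _ : Fin d → ℤ => ℂ) 2) (n : Fin d → ℤ),
    L f n = (1 / 2) * ∑ j : Fin d, (f (n + Pi.single j 1) + f (n - Pi.single j 1))

/-- `T` is the operator of multiplication by `V` on `ℓ²(ℤᵈ)`. -/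
def IsMulOp (d : ℕ) (V : (Fin d → ℤ) → ℂ)
    (T : lp (fun _ : Fin d → ℤ => ℂ) 2 →L[ℂ] lp (fun _ : Fin d → ℤ => ℂ) 2) : Prop :=
  ∀ (f : lp (fun _ : Fin d → ℤ => ℂ) 2) (n : Fin d → ℤ), T f n = V n * f n

/-!
Expanding `(Δ + V)⁴ - Δ⁴` gives the fifteen words in `Δ` and `V` that contain `V`. Since `Δ` flips
the parity of the coordinate sum and `V` preserves it, the words with an odd number of `Δ`'s have
zero diagonal. As `(Δδₘ)(m ± eⱼ) = 1/2`, the diagonal entry of `Δ W Δ` for a multiplication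
operator `W` is the neighbour average `(1/4)∑ⱼ (W(m + eⱼ) + W(m - eⱼ))`; this evaluates the six
words with two `Δ`'s. After summing over `m`, translation invariance turns the neighbour average
of `V²` into `(d/2)∑ V²`, and `V ∈ ℓ¹` makes all the series absolutely convergent.
-/

lemma add_pow_four_sub_pow_four {R : Type*} [Ring R] (a b : R) :
    (a + b) ^ 4 - a ^ 4 =
      a*a*a*b + a*a*b*a + a*b*a*a + b*a*a*a
      + a*b*b*b + b*a*b*b + b*b*a*b + b*b*b*a
      + a*a*b*b + a*b*a*b + a*b*b*a + b*a*a*b + b*a*b*a + b*b*a*a + b*b*b*b := by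
  noncomm_ring

section Lattice

variable {ι : Type*}

def latticeParity [Fintype ι] (n : ι → ℤ) : ZMod 2 := ∑ i, (n i : ZMod 2)

variable [DecidableEq ι]

lemma latticeParity_add_single [Fintype ι] (n : ι → ℤ) (j : ι) :
    latticeParity (n + Pi.single j 1) = latticeParity n + 1 := by
  simp [latticeParity, Finset.sum_add_distrib, Pi.single_apply]

lemma latticeParity_sub_single [Fintype ι] (n : ι → ℤ) (j : ι) :
    latticeParity (n - Pi.single j 1) = latticeParity n + 1 := by
  simpa [latticeParity, CharTwo.sub_eq_add] using latticeParity_add_single n j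

lemma add_single_add_single_ne (m : ι → ℤ) (j k : ι) : m + Pi.single j 1 + Pi.single k 1 ≠ m := by
  intro h
  have := congrFun h j
  simp only [Pi.add_apply, Pi.single_eq_same, Pi.single_apply] at this
  split_ifs at this <;> omega

lemma sub_single_sub_single_ne (m : ι → ℤ) (j k : ι) : m - Pi.single j 1 - Pi.single k 1 ≠ m := by
  intro h
  have := congrFun h j
  simp only [Pi.sub_apply, Pi.single_eq_same, Pi.single_apply] at this
  split_ifs at this <;> omega

lemma add_single_sub_single_eq_self_iff (m : ι → ℤ) (j k : ι) :
    m + Pi.single j 1 - Pi.single k 1 = m ↔ k = j := by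
  refine ⟨fun h => by_contra fun hkj => ?_, fun hkj => by simp [hkj]⟩
  simpa [Ne.symm hkj] using congrFun h j

lemma sub_single_add_single_eq_self_iff (m : ι → ℤ) (j k : ι) :
    m - Pi.single j 1 + Pi.single k 1 = m ↔ k = j := by
  refine ⟨fun h => by_contra fun hkj => ?_, fun hkj => by simp [hkj]⟩
  simpa [Ne.symm hkj] using congrFun h j

end Lattice

section Operators

variable {d : ℕ} {V W : (Fin d → ℤ) → ℂ}
  {L T M : lp (fun _ : Fin d → ℤ => ℂ) 2 →L[ℂ] lp (fun _ : Fin d → ℤ => ℂ) 2}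

def VanishesOnParity (p : ZMod 2) (f : (Fin d → ℤ) → ℂ) : Prop :=
  ∀ n, latticeParity n = p → f n = 0

lemma vanishesOnParity_single (m : Fin d → ℤ) :
    VanishesOnParity (latticeParity m + 1) (lp.single 2 m (1 : ℂ)) := by
  intro n hn
  refine lp.single_apply_ne _ _ _ fun hnm => ?_
  subst hnm
  simp at hn

lemma IsDiscreteLaplacian.vanishesOnParity (hL : IsDiscreteLaplacian d L) {p : ZMod 2}
    {g : lp (fun _ : Fin d → ℤ => ℂ) 2} (hg : VanishesOnParity p g) :
    VanishesOnParity (p + 1) (L g) := by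
  intro n hn
  have hnbr : latticeParity n + 1 = p := by
    rw [hn, add_assoc, CharTwo.add_self_eq_zero, add_zero]
  rw [hL, Finset.sum_eq_zero fun j _ => ?_, mul_zero]
  rw [hg _ ((latticeParity_add_single n j).trans hnbr),
    hg _ ((latticeParity_sub_single n j).trans hnbr), add_zero]

lemma IsMulOp.vanishesOnParity (hT : IsMulOp d V T) {p : ZMod 2}
    {g : lp (fun _ : Fin d → ℤ => ℂ) 2} (hg : VanishesOnParity p g) :
    VanishesOnParity p (T g) := by
  intro n hn
  rw [hT, hg n hn, mul_zero]

lemma IsMulOp.apply_single (hT : IsMulOp d V T) (m : Fin d → ℤ) :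
    T (lp.single 2 m 1) = V m • lp.single 2 m 1 := by
  ext n
  rw [hT, lp.coeFn_smul, Pi.smul_apply, smul_eq_mul]
  rcases eq_or_ne n m with rfl | hnm
  · rfl
  · simp [hnm]

lemma isMulOp_id (d : ℕ) : IsMulOp d 1 (ContinuousLinearMap.id ℂ _) :=
  fun _ _ => (one_mul _).symm

lemma IsMulOp.mul (hT : IsMulOp d V T) (hM : IsMulOp d W M) : IsMulOp d (V * W) (T * M) :=
  fun f n => (hT (M f) n).trans (by rw [hM, Pi.mul_apply, mul_assoc])

lemma IsDiscreteLaplacian.apply_single_add_single (hL : IsDiscreteLaplacian d L)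
    (m : Fin d → ℤ) (j : Fin d) : L (lp.single 2 m 1) (m + Pi.single j 1) = 1 / 2 := by
  rw [hL]
  simp [Pi.single_apply, add_single_add_single_ne, add_single_sub_single_eq_self_iff]

lemma IsDiscreteLaplacian.apply_single_sub_single (hL : IsDiscreteLaplacian d L)
    (m : Fin d → ℤ) (j : Fin d) : L (lp.single 2 m 1) (m - Pi.single j 1) = 1 / 2 := by
  rw [hL]
  simp [Pi.single_apply, sub_single_sub_single_ne, sub_single_add_single_eq_self_iff]

lemma IsDiscreteLaplacian.apply_mulOp_apply_single_self (hL : IsDiscreteLaplacian d L)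
    (hM : IsMulOp d W M) (m : Fin d → ℤ) :
    L (M (L (lp.single 2 m 1))) m
      = 1 / 4 * ∑ j : Fin d, (W (m + Pi.single j 1) + W (m - Pi.single j 1)) := by
  rw [hL]
  simp only [hM _ _, hL.apply_single_add_single, hL.apply_single_sub_single, Finset.mul_sum]
  exact Finset.sum_congr rfl fun j _ => by ring

lemma IsDiscreteLaplacian.sq_apply_single_self (hL : IsDiscreteLaplacian d L) (m : Fin d → ℤ) :
    L (L (lp.single 2 m 1)) m = d / 2 := by
  rw [← ContinuousLinearMap.id_apply (R₁ := ℂ) (L (lp.single 2 m 1)),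
    hL.apply_mulOp_apply_single_self (isMulOp_id d)]
  simp only [Pi.one_apply, Finset.sum_const, Finset.card_univ, Fintype.card_fin, nsmul_eq_mul]
  ring

lemma IsDiscreteLaplacian.add_mulOp_pow_four_sub_apply_single_self
    (hL : IsDiscreteLaplacian d L) (hT : IsMulOp d V T) (m : Fin d → ℤ) :
    ((L + T) ^ 4 - L ^ 4) (lp.single 2 m 1) m
      = V m ^ 4 + 3 * d / 2 * V m ^ 2
        + 1 / 4 * ∑ j : Fin d, (V (m + Pi.single j 1) ^ 2 + V (m - Pi.single j 1) ^ 2)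
        + 1 / 2 * ∑ j : Fin d, V m * (V (m + Pi.single j 1) + V (m - Pi.single j 1)) := by
  set δ : lp (fun _ : Fin d → ℤ => ℂ) 2 := lp.single 2 m 1
  have hδ := vanishesOnParity_single m
  have hpar : latticeParity m = latticeParity m + 1 + 1 := by
    rw [add_assoc, CharTwo.add_self_eq_zero, add_zero]
  have hpar' : latticeParity m = latticeParity m + 1 + 1 + 1 + 1 := by
    rw [← hpar, ← hpar]
  have hTδ : T δ = V m • δ := hT.apply_single m
  have hT' : ∀ f n, T f n = V n * f n := hT
  -- once `Tδ = V m • δ` and the outer `T`'s are evaluated at `m`, every odd word is one of these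
  have hLδ : L δ m = 0 := hL.vanishesOnParity hδ m hpar
  have hLLLδ : L (L (L δ)) m = 0 :=
    hL.vanishesOnParity (hL.vanishesOnParity (hL.vanishesOnParity hδ)) m hpar'
  have hLLTLδ : L (L (T (L δ))) m = 0 :=
    hL.vanishesOnParity (hL.vanishesOnParity (hT.vanishesOnParity (hL.vanishesOnParity hδ)))
      m hpar'
  have hLTLLδ : L (T (L (L δ))) m = 0 :=
    hL.vanishesOnParity (hT.vanishesOnParity (hL.vanishesOnParity (hL.vanishesOnParity hδ)))
      m hpar'
  have hLTTLδ : L (T (T (L δ))) m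
      = 1 / 4 * ∑ j : Fin d, (V (m + Pi.single j 1) ^ 2 + V (m - Pi.single j 1) ^ 2) :=
    (hL.apply_mulOp_apply_single_self (hT.mul hT) m).trans (by simp only [Pi.mul_apply, sq])
  have hLLδ : L (L δ) m = d / 2 := hL.sq_apply_single_self m
  have hLTLδ : L (T (L δ)) m
      = 1 / 4 * ∑ j : Fin d, (V (m + Pi.single j 1) + V (m - Pi.single j 1)) :=
    hL.apply_mulOp_apply_single_self hT m
  have hδm : δ m = 1 := lp.single_apply_self _ _ _
  rw [add_pow_four_sub_pow_four]
  simp only [add_apply, mul_apply_eq_comp, lp.coeFn_add, Pi.add_apply, hTδ, map_smul,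
    lp.coeFn_smul, Pi.smul_apply, smul_eq_mul, hT', hLδ, hLLLδ, hLLTLδ, hLTLLδ, hLTTLδ, hLLδ, hLTLδ,
    hδm, ← Finset.mul_sum]
  ring

end Operators

lemma summable_norm_mul_of_summable_norm {ι R : Type*} [NormedRing R] {f g : ι → R}
    (hf : Summable fun i => ‖f i‖) (hg : Summable fun i => ‖g i‖) :
    Summable fun i => ‖f i * g i‖ := by
  refine Summable.of_nonneg_of_le (fun i => norm_nonneg _) (fun i => (norm_mul_le _ _).trans ?_)
    (hf.mul_right (∑' i, ‖g i‖))
  exact mul_le_mul_of_nonneg_left (hg.le_tsum i fun j _ => norm_nonneg _) (norm_nonneg _)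

section Translation

variable {G α : Type*} [AddGroup G] [AddCommMonoid α] [TopologicalSpace α] {f : G → α} {a : α}

lemma HasSum.comp_add_right (hf : HasSum f a) (b : G) : HasSum (fun x => f (x + b)) a :=
  (Equiv.addRight b).hasSum_iff.2 hf

lemma HasSum.comp_sub_right (hf : HasSum f a) (b : G) : HasSum (fun x => f (x - b)) a :=
  (Equiv.subRight b).hasSum_iff.2 hf

end Translation

lemma hasSum_diagonal {d : ℕ} {V : (Fin d → ℤ) → ℂ} (hV : Summable fun n => ‖V n‖) :
    HasSum (fun m => V m ^ 4 + 3 * d / 2 * V m ^ 2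
        + 1 / 4 * ∑ j : Fin d, (V (m + Pi.single j 1) ^ 2 + V (m - Pi.single j 1) ^ 2)
        + 1 / 2 * ∑ j : Fin d, V m * (V (m + Pi.single j 1) + V (m - Pi.single j 1)))
      ((∑' m, V m ^ 4) + (2 * d : ℂ) * (∑' m, V m ^ 2)
        + (1 / 2 : ℂ) * ∑' m, ∑ j : Fin d,
            V m * (V (m + Pi.single j 1) + V (m - Pi.single j 1))) := by
  have hV2 : Summable fun m => ‖V m ^ 2‖ := by
    simpa only [sq] using summable_norm_mul_of_summable_norm hV hV
  have hsq : HasSum (fun m => V m ^ 2) (∑' m, V m ^ 2) := hV2.of_norm.hasSum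
  have hfourth : HasSum (fun m => V m ^ 4) (∑' m, V m ^ 4) := by
    simpa only [← pow_add] using (summable_norm_mul_of_summable_norm hV2 hV2).of_norm.hasSum
  have hshifts (j : Fin d) :
      HasSum (fun m : Fin d → ℤ => V (m + Pi.single j 1) ^ 2 + V (m - Pi.single j 1) ^ 2)
        (2 * ∑' m, V m ^ 2) := by
    rw [two_mul]
    exact (hsq.comp_add_right (Pi.single j 1)).add (hsq.comp_sub_right (Pi.single j 1))
  have hcross : Summable fun m =>
      ∑ j : Fin d, V m * (V (m + Pi.single j 1) + V (m - Pi.single j 1)) := by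
    refine summable_sum fun j _ => ?_
    simp only [mul_add]
    exact (summable_norm_mul_of_summable_norm hV
        (hV.hasSum.comp_add_right (Pi.single j 1)).summable).of_norm.add
      (summable_norm_mul_of_summable_norm hV
        (hV.hasSum.comp_sub_right (Pi.single j 1)).summable).of_norm
  convert (((hfourth.add (hsq.mul_left (3 * d / 2 : ℂ))).add
    ((hasSum_sum fun j _ => hshifts j).mul_left (1 / 4))).add
    (hcross.hasSum.mul_left (1 / 2))) using 1
  rw [Finset.sum_const, Finset.card_univ, Fintype.card_fin, nsmul_eq_mul]
  ring

theorem statement10_general (d : ℕ) (V : (Fin d → ℤ) → ℂ)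
    (hV : Summable (fun n => ‖V n‖))
    (L T : lp (fun _ : Fin d → ℤ => ℂ) 2 →L[ℂ] lp (fun _ : Fin d → ℤ => ℂ) 2)
    (hL : IsDiscreteLaplacian d L) (hT : IsMulOp d V T) :
    Summable (fun m : Fin d → ℤ => ((L + T) ^ 4 - L ^ 4) (lp.single 2 m (1:ℂ)) m) ∧
    (∑' m : Fin d → ℤ, ((L + T) ^ 4 - L ^ 4) (lp.single 2 m (1:ℂ)) m)
      = (∑' m : Fin d → ℤ, V m ^ 4) + (2 * d : ℂ) * (∑' m : Fin d → ℤ, V m ^ 2)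
        + (1 / 2 : ℂ) * ∑' m : Fin d → ℤ, ∑ j : Fin d,
            V m * (V (m + Pi.single j 1) + V (m - Pi.single j 1)) := by
  have h := hasSum_diagonal hV
  simp_rw [← hL.add_mulOp_pow_four_sub_apply_single_self hT] at h
  exact ⟨h.summable, h.tsum_eq⟩

/-- For `d ≥ 1` and `V ∈ ℓ¹(ℤᵈ)`, with `H = Δ + V`, the diagonal family
of `H⁴ - Δ⁴` is summable and
`Tr(H⁴ - Δ⁴) = ∑ V(m)⁴ + 2d ∑ V(m)² + (1/2) ∑_m ∑_j V(m)(V(m+eⱼ) + V(m-eⱼ))`. -/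
theorem statement10 (d : ℕ) (hd : 1 ≤ d) (V : (Fin d → ℤ) → ℂ)
    (hV : Summable (fun n => ‖V n‖))
    (L T : lp (fun _ : Fin d → ℤ => ℂ) 2 →L[ℂ] lp (fun _ : Fin d → ℤ => ℂ) 2)
    (hL : IsDiscreteLaplacian d L) (hT : IsMulOp d V T) :
    Summable (fun m : Fin d → ℤ => ((L + T) ^ 4 - L ^ 4) (lp.single 2 m (1:ℂ)) m) ∧
    (∑' m : Fin d → ℤ, ((L + T) ^ 4 - L ^ 4) (lp.single 2 m (1:ℂ)) m)
      = (∑' m : Fin d → ℤ, V m ^ 4) + (2 * d : ℂ) * (∑' m : Fin d → ℤ, V m ^ 2)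
        + (1 / 2 : ℂ) * ∑' m : Fin d → ℤ, ∑ j : Fin d,
            V m * (V (m + Pi.single j 1) + V (m - Pi.single j 1)) :=
  statement10_general d V hV L T hL hT
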